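/- Let 𝒳 be a full subcategory of an abelian category 𝒜. The collection of short exact sequences 0 → A → B → C → 0 with Hom(X,B) → Hom(X,C) surjective for all X ∈ 𝒳 endows 𝒜 with the structure of an exact category (i.e., it is closed under pushout, pullback, and composition of admissible epics and monics). -/

import Mathlib

open CategoryTheory CategoryTheory.Limits CategoryTheory.Category

universe w v u v' u'

namespace RelDer

variable {𝒜 : Type u} [Category.{v} 𝒜] [Abelian 𝒜]

/-- `g` is an `F`-epimorphism: it fits into an `F`-exact short exact sequence. -/
def FEpi (F : ShortComplex 𝒜 → Prop) {B C : 𝒜} (g : B ⟶ C) : Prop :=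
  ∃ (K : 𝒜) (k : K ⟶ B) (w : k ≫ g = 0), F (ShortComplex.mk k g w)

/-- `f` is an `F`-monomorphism. -/
def FMono (F : ShortComplex 𝒜 → Prop) {A B : 𝒜} (f : A ⟶ B) : Prop :=
  ∃ (C : 𝒜) (g : B ⟶ C) (w : f ≫ g = 0), F (ShortComplex.mk f g w)

/-- `P` is `F`-projective: `Hom(P,-)` sends `F`-exact sequences to exact sequences. -/
def FProjective (F : ShortComplex 𝒜 → Prop) (P : 𝒜) : Prop :=
  ∀ (S : ShortComplex 𝒜), F S → ∀ (p : P ⟶ S.X₃), ∃ q : P ⟶ S.X₂, q ≫ S.g = p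

/-- `I` is `F`-injective. -/
def FInjective (F : ShortComplex 𝒜 → Prop) (I : 𝒜) : Prop :=
  ∀ (S : ShortComplex 𝒜), F S → ∀ (p : S.X₁ ⟶ I), ∃ q : S.X₂ ⟶ I, S.f ≫ q = p

/-- `F` has enough projectives. -/
def HasEnoughFProjectives (F : ShortComplex 𝒜 → Prop) : Prop :=
  ∀ M : 𝒜, ∃ (P : 𝒜) (g : P ⟶ M), FProjective F P ∧ FEpi F g

/-- `F` has enough injectives. -/
def HasEnoughFInjectives (F : ShortComplex 𝒜 → Prop) : Prop :=
  ∀ M : 𝒜, ∃ (I : 𝒜) (f : M ⟶ I), FInjective F I ∧ FMono F f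

lemma image_ι_comp_d (X : CochainComplex 𝒜 ℤ) (i : ℤ) :
    image.ι (X.d (i-1) i) ≫ X.d i (i+1) = 0 := by
  rw [← cancel_epi (factorThruImage (X.d (i-1) i)), image.fac_assoc,
    HomologicalComplex.d_comp_d, comp_zero]

/-- The short complex `Im d^{i-1} → X^i → Im d^i` associated to a cochain complex. -/
noncomputable def imagesShortComplex (X : CochainComplex 𝒜 ℤ) (i : ℤ) : ShortComplex 𝒜 :=
  ShortComplex.mk (image.ι (X.d (i-1) i)) (factorThruImage (X.d i (i+1)))
    (by rw [← cancel_mono (image.ι (X.d i (i+1))), assoc, image.fac, zero_comp,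
      image_ι_comp_d])

/-- A complex is `F`-acyclic if each `0 → Im d^{i-1} → X^i → Im d^i → 0` is `F`-exact. -/
def FAcyclic (F : ShortComplex 𝒜 → Prop) (X : CochainComplex 𝒜 ℤ) : Prop :=
  ∀ i : ℤ, F (imagesShortComplex X i)

/-- A chain map is an `F`-quasi-isomorphism if its mapping cone is `F`-acyclic. -/
def FQuasiIso (F : ShortComplex 𝒜 → Prop) {X Y : CochainComplex 𝒜 ℤ} (f : X ⟶ Y) : Prop :=
  FAcyclic F (CochainComplex.mappingCone f)

def BoundedAbove (X : CochainComplex 𝒜 ℤ) : Prop :=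
  ∃ n : ℤ, ∀ i, n < i → IsZero (X.X i)

def Bounded (X : CochainComplex 𝒜 ℤ) : Prop :=
  ∃ a b : ℤ, ∀ i, (i < a ∨ b < i) → IsZero (X.X i)

/-- An equivalence of (pre)triangulated categories. -/
structure TriangleEquivalence (C : Type u) (D : Type u') [Category.{v} C] [Category.{v'} D]
    [HasShift C ℤ] [HasShift D ℤ] [Preadditive C] [Preadditive D]
    [HasZeroObject C] [HasZeroObject D]
    [∀ n : ℤ, (shiftFunctor C n).Additive] [∀ n : ℤ, (shiftFunctor D n).Additive]
    [Pretriangulated C] [Pretriangulated D] where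
  e : C ≌ D
  commShift : e.functor.CommShift ℤ
  isTriangulated : letI := commShift; e.functor.IsTriangulated

/-- Two maps are stably equal if their difference factors through an object satisfying `P`. -/
def stableHomRel (P : 𝒜 → Prop) : HomRel 𝒜 := fun {X Y} f g =>
  ∃ (Z : 𝒜) (_ : P Z) (a : X ⟶ Z) (b : Z ⟶ Y), f - g = a ≫ b

/-- The stable category of `𝒜` modulo objects satisfying `P`. -/
abbrev StableCategory (P : 𝒜 → Prop) := CategoryTheory.Quotient (stableHomRel P)

/-- The complex `Hom(P^•, Y)` of abelian groups, whose homology computes relative Ext. -/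
noncomputable def homComplex (P : CochainComplex 𝒜 ℤ) (Y : 𝒜) :
    HomologicalComplex AddCommGrpCat (ComplexShape.up ℤ).symm :=
  ((preadditiveYoneda.obj Y).mapHomologicalComplex (ComplexShape.up ℤ).symm).obj P.op

/-- The relative Ext group `Ext^i_F(X,Y)` computed from an `F`-projective resolution `P` of
`X` as the `i`-th cohomology of `Hom(P^•,Y)`. -/
noncomputable def extFGroup (P : CochainComplex 𝒜 ℤ) (Y : 𝒜) (i : ℤ) : AddCommGrpCat :=
  (homComplex P Y).homology (-i)

/-- `P`, together with the augmentation `ε`, is an `F`-projective resolution of `X`. -/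
def IsFProjResolution (F : ShortComplex 𝒜 → Prop) (X : 𝒜) (P : CochainComplex 𝒜 ℤ)
    (ε : P ⟶ (CochainComplex.singleFunctor 𝒜 0).obj X) : Prop :=
  (∀ i : ℤ, 0 < i → IsZero (P.X i)) ∧ (∀ i : ℤ, FProjective F (P.X i)) ∧ FQuasiIso F ε

/-- `X` has `F`-projective dimension at most `m`. -/
def FProjDimLe (F : ShortComplex 𝒜 → Prop) (X : 𝒜) (m : ℕ) : Prop :=
  ∃ (P : CochainComplex 𝒜 ℤ) (ε : P ⟶ (CochainComplex.singleFunctor 𝒜 0).obj X),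
    IsFProjResolution F X P ε ∧ ∀ i : ℤ, i < -(m : ℤ) → IsZero (P.X i)

/-- `I`, together with the augmentation `ε`, is an `F`-injective coresolution of `X`. -/
def IsFInjCoresolution (F : ShortComplex 𝒜 → Prop) (X : 𝒜) (I : CochainComplex 𝒜 ℤ)
    (ε : (CochainComplex.singleFunctor 𝒜 0).obj X ⟶ I) : Prop :=
  (∀ i : ℤ, i < 0 → IsZero (I.X i)) ∧ (∀ i : ℤ, FInjective F (I.X i)) ∧ FQuasiIso F ε

/-- `X` has `F`-injective dimension at most `m`. -/
def FInjDimLe (F : ShortComplex 𝒜 → Prop) (X : 𝒜) (m : ℕ) : Prop :=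
  ∃ (I : CochainComplex 𝒜 ℤ) (ε : (CochainComplex.singleFunctor 𝒜 0).obj X ⟶ I),
    IsFInjCoresolution F X I ε ∧ ∀ i : ℤ, (m : ℤ) < i → IsZero (I.X i)

/-- The `F`-projective dimension of `X`, valued in `ℕ∞`. -/
noncomputable def FProjDim (F : ShortComplex 𝒜 → Prop) (X : 𝒜) : ℕ∞ :=
  sInf {n : ℕ∞ | ∃ m : ℕ, n = m ∧ FProjDimLe F X m}

/-- The `F`-injective dimension of `X`, valued in `ℕ∞`. -/
noncomputable def FInjDim (F : ShortComplex 𝒜 → Prop) (X : 𝒜) : ℕ∞ :=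
  sInf {n : ℕ∞ | ∃ m : ℕ, n = m ∧ FInjDimLe F X m}

/-- The `F`-global dimension. -/
noncomputable def FGlobalDim (F : ShortComplex 𝒜 → Prop) : ℕ∞ :=
  ⨆ X : 𝒜, FProjDim F X

/-- The `F`-finitistic dimension. -/
noncomputable def FFinitisticDim (F : ShortComplex 𝒜 → Prop) : ℕ∞ :=
  ⨆ X : {X : 𝒜 // FProjDim F X ≠ ⊤}, FProjDim F X.1

/-- The class of all short exact sequences: the absolute (non-relative) exact structure. -/
def allExact : ShortComplex 𝒜 → Prop := fun S => S.ShortExact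

/-- `M` belongs to `add G`. -/
def InAdd (G M : 𝒜) : Prop :=
  haveI : HasFiniteBiproducts 𝒜 := Abelian.hasFiniteBiproducts
  ∃ (n : ℕ) (N : 𝒜), Nonempty ((M ⊞ N) ≅ (⨁ fun _ : Fin n => G))

/-- The structure `Triangulated.Subcategory` of the older Mathlib (removed since), restated
with its old fields. -/
structure Triangulated.Subcategory (C : Type u') [Category.{v'} C] [HasZeroObject C]
    [HasShift C ℤ] [Preadditive C] [∀ n : ℤ, (shiftFunctor C n).Additive]
    [Pretriangulated C] where
  P : C → Prop
  zero' : ∃ (Z : C) (_ : IsZero Z), P Z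
  shift (X : C) (n : ℤ) : P X → P ((shiftFunctor C n).obj X)
  ext₂' (T : Pretriangulated.Triangle C)
    (_ : T ∈ (Pretriangulated.distinguishedTriangles : Set (Pretriangulated.Triangle C))) :
    P T.obj₁ → P T.obj₃ → ObjectProperty.isoClosure P T.obj₂

/-- `T` generates the objects satisfying `Gen` as a triangulated category
(closed under isomorphisms and retracts/direct summands). -/
def Generates {𝒯 : Type u'} [Category.{v'} 𝒯] [HasZeroObject 𝒯] [HasShift 𝒯 ℤ]
    [Preadditive 𝒯] [∀ n : ℤ, (shiftFunctor 𝒯 n).Additive] [Pretriangulated 𝒯]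
    (T : 𝒯) (Gen : 𝒯 → Prop) : Prop :=
  ∀ (S : Triangulated.Subcategory 𝒯),
    (∀ X Y : 𝒯, (X ≅ Y) → S.P X → S.P Y) →
    (∀ X Y : 𝒯, (∃ (r : X ⟶ Y) (s : Y ⟶ X), s ≫ r = 𝟙 Y) → S.P X → S.P Y) →
    S.P T → ∀ X : 𝒯, Gen X → S.P X

universe u₁ v₁ u₂ v₂ u₃ v₃

/-- A short exact sequence is `F_𝒳`-exact if `Hom(X, -)` sends it to a short exact
sequence for all `X` in `𝒳`. -/
def FXExact {𝒜 : Type u} [Category.{v} 𝒜] [Abelian 𝒜] (𝒳 : 𝒜 → Prop)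
    (S : ShortComplex 𝒜) : Prop :=
  S.ShortExact ∧ ∀ X : 𝒜, 𝒳 X → ∀ x : X ⟶ S.X₃, ∃ y : X ⟶ S.X₂, y ≫ S.g = x


/-! Since `Hom(X, -)` is left exact, only the surjectivity of `Hom(X, S.g)` is at stake. It passes
along pullbacks and along isomorphisms of the third term, and it composes for admissible epics.
For admissible monics `f`, `g`, the induced sequence `coker f → coker (f ≫ g) → coker g` is short
exact (a chase with refinements), so a lift along `coker (f ≫ g)` is assembled from a lift along
`coker g` corrected by a lift along `coker f`. -/

section DiagramChase

variable {A B C D E Q : 𝒜}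

lemma mono_of_comp_eq_comp {f : A ⟶ B} {g : B ⟶ C} {p : B ⟶ D} {π : C ⟶ Q} {j : D ⟶ Q}
    [Mono g] [Epi p] (wp : f ≫ p = 0) {w : (f ≫ g) ≫ π = 0}
    (hπ : (ShortComplex.mk (f ≫ g) π w).Exact) (hj : p ≫ j = g ≫ π) : Mono j := by
  refine Preadditive.mono_of_cancel_zero _ fun {T} d hd => ?_
  obtain ⟨T₁, e₁, _, b, hb⟩ := surjective_up_to_refinements_of_epi p d
  obtain ⟨T₂, e₂, _, a, ha⟩ := hπ.exact_up_to_refinements (b ≫ g)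
    (by rw [assoc, ← hj, ← assoc, ← hb, assoc, hd, comp_zero])
  have hba : e₂ ≫ b = a ≫ f := by
    rw [← cancel_mono g, assoc, ha, assoc]
  rw [← cancel_epi (e₂ ≫ e₁), comp_zero, assoc, hb, ← assoc, hba, assoc, wp, comp_zero]

lemma exact_of_comp_eq_comp {g : B ⟶ C} {q : C ⟶ E} {p : B ⟶ D} {π : C ⟶ Q} {j : D ⟶ Q}
    {r : Q ⟶ E} [Epi π] {wq : g ≫ q = 0} (hq : (ShortComplex.mk g q wq).Exact)
    (hj : p ≫ j = g ≫ π) (hr : π ≫ r = q) (w : j ≫ r = 0) :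
    (ShortComplex.mk j r w).Exact := by
  rw [ShortComplex.exact_iff_exact_up_to_refinements]
  intro T x hx
  obtain ⟨T₁, e₁, _, c, hc⟩ := surjective_up_to_refinements_of_epi π x
  have hcq : c ≫ q = 0 := by
    dsimp at hx; rw [← hr, ← assoc, ← hc, assoc, hx, comp_zero]
  obtain ⟨T₂, e₂, _, b, hb⟩ := hq.exact_up_to_refinements c hcq
  exact ⟨T₂, e₂ ≫ e₁, inferInstance, b ≫ p, by
    dsimp at hb ⊢; rw [assoc, hc, ← assoc, hb, assoc, assoc, hj]⟩

lemma surjective_comp_of_exact {X : 𝒜} {g : B ⟶ C} {q : C ⟶ E} {p : B ⟶ D} {π : C ⟶ Q}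
    {j : D ⟶ Q} {r : Q ⟶ E} [Mono j] {w : j ≫ r = 0} (hjr : (ShortComplex.mk j r w).Exact)
    (hj : p ≫ j = g ≫ π) (hr : π ≫ r = q)
    (hp : Function.Surjective fun z : X ⟶ B => z ≫ p)
    (hq : Function.Surjective fun y : X ⟶ C => y ≫ q) :
    Function.Surjective fun y : X ⟶ C => y ≫ π := by
  intro x
  obtain ⟨y, hy⟩ := hq (x ≫ r)
  obtain ⟨d, hd⟩ := hjr.lift' (x - y ≫ π)
    (by dsimp at hy ⊢; rw [Preadditive.sub_comp, assoc, hr, hy, sub_self])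
  obtain ⟨z, rfl⟩ := hp d
  refine ⟨y + z ≫ g, ?_⟩
  dsimp at hd ⊢
  rw [Preadditive.add_comp, assoc, ← hj, ← assoc, hd, add_sub_cancel]

end DiagramChase

variable {𝒳 : 𝒜 → Prop}

lemma FXExact.of_comp_iso {S S' : ShortComplex 𝒜} (hS' : S'.ShortExact) (β : S.X₂ ⟶ S'.X₂)
    (γ : S.X₃ ≅ S'.X₃) (w : β ≫ S'.g = S.g ≫ γ.hom) (hS : FXExact 𝒳 S) : FXExact 𝒳 S' := by
  refine ⟨hS', fun X hX x => ?_⟩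
  obtain ⟨y, hy⟩ := hS.2 X hX (x ≫ γ.inv)
  exact ⟨y ≫ β, by rw [assoc, w, reassoc_of% hy, γ.inv_hom_id, comp_id]⟩

lemma FXExact.of_isPullback {S S' : ShortComplex 𝒜} (hS' : S'.ShortExact) {h : S'.X₃ ⟶ S.X₃}
    {β : S'.X₂ ⟶ S.X₂} (hpb : IsPullback β S'.g S.g h) (hS : FXExact 𝒳 S) : FXExact 𝒳 S' := by
  refine ⟨hS', fun X hX x => ?_⟩
  obtain ⟨y, hy⟩ := hS.2 X hX (x ≫ h)
  exact ⟨hpb.lift y x hy, hpb.lift_snd y x hy⟩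

lemma FEpi.comp {A B C : 𝒜} {g : A ⟶ B} {h : B ⟶ C} (hg : FEpi (FXExact 𝒳) g)
    (hh : FEpi (FXExact 𝒳) h) : FEpi (FXExact 𝒳) (g ≫ h) := by
  obtain ⟨K, k, wk, hK, hKX⟩ := hg
  obtain ⟨L, l, wl, hL, hLX⟩ := hh
  have : Epi g := hK.epi_g
  have : Epi h := hL.epi_g
  refine ⟨kernel (g ≫ h), kernel.ι _, kernel.condition _,
    .mk (ShortComplex.exact_of_f_is_kernel _ (kernelIsKernel _)), fun X hX => ?_⟩
  have hgX : Function.Surjective fun y : X ⟶ A => y ≫ g := hKX X hX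
  have hhX : Function.Surjective fun y : X ⟶ B => y ≫ h := hLX X hX
  have hghX := hhX.comp hgX
  simp only [Function.comp_def, assoc] at hghX
  exact hghX

lemma FMono.comp {A B C : 𝒜} {f : A ⟶ B} {g : B ⟶ C} (hf : FMono (FXExact 𝒳) f)
    (hg : FMono (FXExact 𝒳) g) : FMono (FXExact 𝒳) (f ≫ g) := by
  obtain ⟨D, p, wp, hp, hpX⟩ := hf
  obtain ⟨E, q, wq, hq, hqX⟩ := hg
  have : Mono f := hp.mono_f
  have : Epi p := hp.epi_g
  have : Mono g := hq.mono_f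
  let π := cokernel.π (f ≫ g)
  have hπ : (ShortComplex.mk (f ≫ g) π (cokernel.condition _)).Exact :=
    ShortComplex.exact_of_g_is_cokernel _ (cokernelIsCokernel _)
  let j : D ⟶ cokernel (f ≫ g) :=
    hp.exact.desc (g ≫ π) (by rw [← assoc]; exact cokernel.condition _)
  let r : cokernel (f ≫ g) ⟶ E := cokernel.desc _ q (by simp [wq])
  have hj : p ≫ j = g ≫ π := hp.exact.g_desc _ _
  have hr : π ≫ r = q := cokernel.π_desc _ _ _
  have : Mono j := mono_of_comp_eq_comp wp hπ hj
  have wjr : j ≫ r = 0 := by rw [← cancel_epi p, reassoc_of% hj, hr, wq, comp_zero]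
  exact ⟨_, π, cokernel.condition _, .mk hπ, fun X hX =>
    surjective_comp_of_exact (exact_of_comp_eq_comp hq.exact hj hr wjr) hj hr
      (hpX X hX) (hqX X hX)⟩

/-- The class of `F_𝒳`-exact sequences gives `𝒜` the structure of an exact category:
it is closed under pushout, pullback, and composition of admissible epics and monics. -/
theorem statement2 {𝒜 : Type u} [Category.{v} 𝒜] [Abelian 𝒜] (𝒳 : 𝒜 → Prop) :
    -- closed under pushout
    (∀ (S S' : ShortComplex 𝒜), S'.ShortExact →
      ∀ (f : S.X₁ ⟶ S'.X₁) (β : S.X₂ ⟶ S'.X₂) (γ : S.X₃ ≅ S'.X₃),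
        IsPushout f S.f S'.f β → β ≫ S'.g = S.g ≫ γ.hom →
        FXExact 𝒳 S → FXExact 𝒳 S') ∧
    -- closed under pullback
    (∀ (S S' : ShortComplex 𝒜), S'.ShortExact →
      ∀ (h : S'.X₃ ⟶ S.X₃) (β : S'.X₂ ⟶ S.X₂) (γ : S'.X₁ ≅ S.X₁),
        IsPullback β S'.g S.g h → S'.f ≫ β = γ.hom ≫ S.f →
        FXExact 𝒳 S → FXExact 𝒳 S') ∧
    -- composition of admissible epics
    (∀ (A B C : 𝒜) (g : A ⟶ B) (h : B ⟶ C),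
      FEpi (FXExact 𝒳) g → FEpi (FXExact 𝒳) h → FEpi (FXExact 𝒳) (g ≫ h)) ∧
    -- composition of admissible monics
    (∀ (A B C : 𝒜) (f : A ⟶ B) (g : B ⟶ C),
      FMono (FXExact 𝒳) f → FMono (FXExact 𝒳) g → FMono (FXExact 𝒳) (f ≫ g)) :=
  ⟨fun _ _ hS' _ β γ _ w hS => hS.of_comp_iso hS' β γ w,
    fun _ _ hS' _ _ _ hpb _ hS => hS.of_isPullback hS' hpb,
    fun _ _ _ _ _ => FEpi.comp, fun _ _ _ _ _ => FMono.comp⟩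

end RelDer
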